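/- (Propagation rules) Suppose there exists an [[n, k, d]]_q code with k ≥ 1 and d ≥ 2. Then: (i) there exists an [[n, k − 1, d]]_q code (subcode construction); (ii) there exists an [[n + 1, k, d]]_q code (lengthening); and (iii) if n ≥ 2, there exists an [[n − 1, k, d − 1]]_q code (puncturing). -/

import Mathlib

/-!
Subcodes of a code are codes, and extending states by a fixed basis state of an extra qudit
(`lengthen`) preserves the Knill–Laflamme condition: an error acting by a nonzero `X` on the
new qudit moves the code into an orthogonal subspace.

For puncturing, the Knill–Laflamme condition applied to the weight-one errors `Z(β)` on the
first qudit makes each of them act as a scalar `λ_β` on the code (`rayleigh`). Fourier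
inversion over `β` then shows that fixing the first coordinate to `c` (`slice`) multiplies
the Gram form of the code by `ν_c = q⁻¹ ∑_β χ(-βc) λ_β`. The `ν_c` sum to `1`, so some slice is
injective on the code, and it turns errors of weight at most `d - 2` into combinations of
errors of weight at most `d - 1` on the original code.
-/

open Matrix

open scoped BigOperators

/-- The error operator `X(a)`, acting on `ℂ^{q^n}` (with coordinates indexed by
`F^n`) by `X(a) e_v = e_{a+v}`. -/
noncomputable def Xq (F : Type) [Field F] [Fintype F] [DecidableEq F]
    (n : ℕ) (a : Fin n → F) : Matrix (Fin n → F) (Fin n → F) ℂ :=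
  Matrix.of fun w v => if w = a + v then 1 else 0

/-- The error operator `Z(b)`, acting on `ℂ^{q^n}` by
`Z(b) e_v = ω^{Tr(b·v)} e_v`, where `ω = exp(2πi/p)` and the absolute trace
`Tr(b·v) ∈ F_p` is lifted to `{0,…,p−1} ⊆ ℤ`. -/
noncomputable def Zq (p : ℕ) (F : Type) [Field F] [Fintype F] [DecidableEq F]
    [CharP F p] [Algebra (ZMod p) F]
    (n : ℕ) (b : Fin n → F) : Matrix (Fin n → F) (Fin n → F) ℂ :=
  Matrix.of fun w v =>
    if w = v then
      Complex.exp (2 * Real.pi * Complex.I / p) ^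
        (Algebra.trace (ZMod p) F (b ⬝ᵥ v)).val
    else 0

/-- The quantum weight of `(a|b)`: the number of indices `i` with `a_i ≠ 0` or
`b_i ≠ 0`. -/
noncomputable def wQq (F : Type) [Zero F] (n : ℕ) (a b : Fin n → F) : ℕ :=
  {i : Fin n | a i ≠ 0 ∨ b i ≠ 0}.ncard

/-- The Hamming weight of a vector in `F^n`. -/
noncomputable def wH (F : Type) [Zero F] (n : ℕ) (x : Fin n → F) : ℕ :=
  {i : Fin n | x i ≠ 0}.ncard

/-- `Q` is an `[[n, k, d]]_q` code (`q = |F|`): a subspace of `ℂ^{q^n}` of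
dimension `q^k` satisfying the Knill–Laflamme condition for `d`, i.e. for all
errors `X(a)Z(b)` of quantum weight at most `d − 1` and all orthogonal
`φ, ψ ∈ Q` one has `⟨φ, X(a)Z(b) ψ⟩ = 0`. -/
noncomputable def IsQECC (p : ℕ) (F : Type) [Field F] [Fintype F] [DecidableEq F]
    [CharP F p] [Algebra (ZMod p) F]
    (n k d : ℕ) (Q : Submodule ℂ ((Fin n → F) → ℂ)) : Prop :=
  Module.finrank ℂ Q = Fintype.card F ^ k ∧
  ∀ a b : Fin n → F, wQq F n a b ≤ d - 1 →
    ∀ φ ∈ Q, ∀ ψ ∈ Q, star φ ⬝ᵥ ψ = 0 →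
      star φ ⬝ᵥ (Xq F n a * Zq p F n b).mulVec ψ = 0

/-- There exists an `[[n, k, d]]_q` code. -/
noncomputable def ExistsQECC (p : ℕ) (F : Type) [Field F] [Fintype F]
    [DecidableEq F] [CharP F p] [Algebra (ZMod p) F] (n k d : ℕ) : Prop :=
  ∃ Q : Submodule ℂ ((Fin n → F) → ℂ), IsQECC p F n k d Q

open scoped ComplexOrder

section StarDotProduct

variable {K ι : Type*} [Field K] [StarRing K] [PartialOrder K] [StarOrderedRing K] [Fintype ι]

noncomputable def rayleigh (M : Matrix ι ι K) (φ : ι → K) : K :=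
  (star φ ⬝ᵥ M *ᵥ φ) / (star φ ⬝ᵥ φ)

variable {M : Matrix ι ι K} {Q : Submodule K (ι → K)}

theorem star_dotProduct_mulVec_eq_rayleigh_mul
    (hM : ∀ φ ∈ Q, ∀ ψ ∈ Q, star φ ⬝ᵥ ψ = 0 → star φ ⬝ᵥ M *ᵥ ψ = 0)
    {φ ψ : ι → K} (hφ : φ ∈ Q) (hφ0 : φ ≠ 0) (hψ : ψ ∈ Q) :
    star φ ⬝ᵥ M *ᵥ ψ = rayleigh M φ * (star φ ⬝ᵥ ψ) ∧
      star ψ ⬝ᵥ M *ᵥ φ = rayleigh M φ * (star ψ ⬝ᵥ φ) := by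
  have hG : star φ ⬝ᵥ φ ≠ 0 := dotProduct_star_self_eq_zero.not.2 hφ0
  constructor
  · have h := hM φ hφ (ψ - (star φ ⬝ᵥ ψ / star φ ⬝ᵥ φ) • φ)
      (Q.sub_mem hψ (Q.smul_mem _ hφ)) (by simp [dotProduct_sub, div_mul_cancel₀ _ hG])
    rw [mulVec_sub, mulVec_smul, dotProduct_sub, dotProduct_smul, sub_eq_zero] at h
    rw [h, rayleigh, smul_eq_mul]
    ring
  · have h := hM (ψ - star (star ψ ⬝ᵥ φ / star φ ⬝ᵥ φ) • φ)
      (Q.sub_mem hψ (Q.smul_mem _ hφ)) φ hφ (by simp [sub_dotProduct, div_mul_cancel₀ _ hG])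
    simp only [star_sub, star_smul, star_star, sub_dotProduct, smul_dotProduct, smul_eq_mul,
      sub_eq_zero] at h
    rw [h, rayleigh]
    ring

theorem rayleigh_eq_of_mem
    (hM : ∀ φ ∈ Q, ∀ ψ ∈ Q, star φ ⬝ᵥ ψ = 0 → star φ ⬝ᵥ M *ᵥ ψ = 0)
    {φ ψ : ι → K} (hφ : φ ∈ Q) (hφ0 : φ ≠ 0) (hψ : ψ ∈ Q) (hψ0 : ψ ≠ 0) :
    rayleigh M φ = rayleigh M ψ := by
  have of_not_orthogonal : ∀ {φ ψ}, φ ∈ Q → φ ≠ 0 → ψ ∈ Q → ψ ≠ 0 → star φ ⬝ᵥ ψ ≠ 0 →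
      rayleigh M φ = rayleigh M ψ := fun hφ hφ0 hψ hψ0 hG => mul_right_cancel₀ hG <| by
    rw [← (star_dotProduct_mulVec_eq_rayleigh_mul hM hφ hφ0 hψ).1,
      ← (star_dotProduct_mulVec_eq_rayleigh_mul hM hψ hψ0 hφ).2]
  by_cases hG : star φ ⬝ᵥ ψ = 0
  · -- pass through `φ + ψ`, which is not orthogonal to either vector
    have hGψψ : star ψ ⬝ᵥ ψ ≠ 0 := dotProduct_star_self_eq_zero.not.2 hψ0
    have hsum : star (φ + ψ) ⬝ᵥ ψ ≠ 0 := by simpa [add_dotProduct, hG] using hGψψ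
    have hsum0 : φ + ψ ≠ 0 := by rintro h; simp [h] at hsum
    have hsumφ : star φ ⬝ᵥ (φ + ψ) ≠ 0 := by
      simpa [dotProduct_add, hG] using dotProduct_star_self_eq_zero.not.2 hφ0
    rw [of_not_orthogonal hφ hφ0 (Q.add_mem hφ hψ) hsum0 hsumφ,
      of_not_orthogonal (Q.add_mem hφ hψ) hsum0 hψ hψ0 hsum]
  · exact of_not_orthogonal hφ hφ0 hψ hψ0 hG

theorem exists_star_dotProduct_mulVec_eq_mul
    (hM : ∀ φ ∈ Q, ∀ ψ ∈ Q, star φ ⬝ᵥ ψ = 0 → star φ ⬝ᵥ M *ᵥ ψ = 0) :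
    ∃ c : K, ∀ φ ∈ Q, ∀ ψ ∈ Q, star φ ⬝ᵥ M *ᵥ ψ = c * (star φ ⬝ᵥ ψ) := by
  by_cases hQ : ∃ φ₀ ∈ Q, φ₀ ≠ 0
  · obtain ⟨φ₀, hφ₀, hφ₀0⟩ := hQ
    refine ⟨rayleigh M φ₀, fun φ hφ ψ hψ => ?_⟩
    rcases eq_or_ne φ 0 with rfl | hφ0
    · simp
    rw [← rayleigh_eq_of_mem hM hφ hφ0 hφ₀ hφ₀0]
    exact (star_dotProduct_mulVec_eq_rayleigh_mul hM hφ hφ0 hψ).1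
  · push Not at hQ
    exact ⟨0, fun φ hφ ψ _ => by simp [hQ φ hφ]⟩

theorem finrank_map_eq_of_star_dotProduct_map_self {κ : Type*} [Fintype κ]
    (f : (ι → K) →ₗ[K] (κ → K)) {ν : K} (hν : ν ≠ 0)
    (hf : ∀ φ ∈ Q, star (f φ) ⬝ᵥ f φ = ν * (star φ ⬝ᵥ φ)) :
    Module.finrank K (Q.map f) = Module.finrank K Q := by
  have hinj : Function.Injective (f ∘ₗ Q.subtype) := by
    rw [← LinearMap.ker_eq_bot, LinearMap.ker_eq_bot']
    intro φ hφ
    have h := hf φ φ.2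
    rw [LinearMap.comp_apply, Submodule.subtype_apply] at hφ
    simpa [hφ, hν] using h
  rw [← LinearMap.finrank_range_of_inj hinj, LinearMap.range_comp, Submodule.range_subtype]

end StarDotProduct

theorem AddChar.IsPrimitive.fourier_inversion {R R' : Type*} [CommRing R] [Fintype R]
    [DecidableEq R] [CommRing R'] [IsDomain R'] {ψ : AddChar R R'} (hψ : ψ.IsPrimitive)
    (f : R → R') (c : R) :
    ∑ β, ψ (-(β * c)) * ∑ γ, ψ (β * γ) * f γ = Fintype.card R * f c := by
  calc ∑ β, ψ (-(β * c)) * ∑ γ, ψ (β * γ) * f γ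
      = ∑ γ, (∑ β, ψ (β * (γ - c))) * f γ := by
        simp_rw [Finset.mul_sum, Finset.sum_mul]
        rw [Finset.sum_comm]
        refine Finset.sum_congr rfl fun γ _ => Finset.sum_congr rfl fun β _ => ?_
        rw [mul_sub, sub_eq_neg_add, AddChar.map_add_eq_mul]
        ring
    _ = Fintype.card R * f c := by
        simp [AddChar.sum_mulShift _ hψ, sub_eq_zero]

section Weight

variable {F : Type} [Zero F]

theorem wQq_eq_card_filter [DecidableEq F] (n : ℕ) (a b : Fin n → F) :
    wQq F n a b = (Finset.univ.filter fun i => a i ≠ 0 ∨ b i ≠ 0).card := by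
  rw [wQq, ← Set.ncard_coe_finset]
  simp

theorem wQq_cons [DecidableEq F] {m : ℕ} (x y : F) (a b : Fin m → F) :
    wQq F (m + 1) (vecCons x a) (vecCons y b) = (if x ≠ 0 ∨ y ≠ 0 then 1 else 0) + wQq F m a b := by
  simp only [wQq_eq_card_filter, Finset.card_filter, Fin.sum_univ_succ, cons_val_zero,
    cons_val_succ]
  congr

theorem wQq_zero (n : ℕ) : wQq F n 0 0 = 0 := by
  simp [wQq]

end Weight

section TraceChar

variable (p : ℕ) [NeZero p] (F : Type) [CommRing F] [Algebra (ZMod p) F]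

noncomputable def traceChar : AddChar F ℂ :=
  (AddChar.zmodChar p (Complex.isPrimitiveRoot_exp p (NeZero.ne p)).pow_eq_one).compAddMonoidHom
    (Algebra.trace (ZMod p) F).toAddMonoidHom

theorem traceChar_apply (x : F) :
    traceChar p F x =
      Complex.exp (2 * Real.pi * Complex.I / p) ^ (Algebra.trace (ZMod p) F x).val :=
  rfl

theorem traceChar_isPrimitive (p : ℕ) [Fact p.Prime] (F : Type) [Field F] [Fintype F] [CharP F p]
    [Algebra (ZMod p) F] : (traceChar p F).IsPrimitive := by
  refine AddChar.IsPrimitive.of_ne_one (AddChar.ne_one_iff.2 ?_)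
  obtain rfl : ringChar F = p := ringChar.eq F p
  obtain ⟨b, hb⟩ := FiniteField.trace_to_zmod_nondegenerate F (one_ne_zero (α := F))
  rw [one_mul] at hb
  exact ⟨b, fun h => hb ((AddChar.zmodChar_primitive_of_primitive_root _
    (Complex.isPrimitiveRoot_exp _ (NeZero.ne _))).zmod_char_eq_one_iff _ _ |>.1 h)⟩

end TraceChar

theorem sum_pi_fin_succ {α M : Type*} [Fintype α] [AddCommMonoid M] {m : ℕ}
    (f : (Fin (m + 1) → α) → M) : ∑ v, f v = ∑ c, ∑ v, f (vecCons c v) := by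
  rw [← (Fin.consEquiv fun _ => α).sum_comp, Fintype.sum_prod_type]
  rfl

section Slice

variable (F : Type)

noncomputable def slice (m : ℕ) (c : F) : ((Fin (m + 1) → F) → ℂ) →ₗ[ℂ] ((Fin m → F) → ℂ) :=
  LinearMap.funLeft ℂ ℂ (vecCons c)

theorem slice_apply {m : ℕ} (c : F) (ψ : (Fin (m + 1) → F) → ℂ) (v : Fin m → F) :
    slice F m c ψ v = ψ (vecCons c v) :=
  rfl

theorem sum_star_dotProduct_slice [Fintype F] {m : ℕ} (φ ψ : (Fin (m + 1) → F) → ℂ) :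
    ∑ c, star (slice F m c φ) ⬝ᵥ slice F m c ψ = star φ ⬝ᵥ ψ := by
  simp only [dotProduct]
  rw [sum_pi_fin_succ]
  rfl

end Slice

section Errors

variable (p : ℕ) [NeZero p] (F : Type) [Field F] [Fintype F] [DecidableEq F] [CharP F p]
  [Algebra (ZMod p) F]

theorem Xq_mulVec {n : ℕ} (a : Fin n → F) (ψ : (Fin n → F) → ℂ) :
    Xq F n a *ᵥ ψ = fun w => ψ (w - a) := by
  ext w
  simp [Xq, mulVec, dotProduct, ← sub_eq_iff_eq_add']

theorem Zq_mulVec {n : ℕ} (b : Fin n → F) (ψ : (Fin n → F) → ℂ) :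
    Zq p F n b *ᵥ ψ = fun v => traceChar p F (b ⬝ᵥ v) * ψ v := by
  ext v
  simp [Zq, mulVec, dotProduct, traceChar_apply]

theorem star_dotProduct_XZ_mulVec {n : ℕ} (a b : Fin n → F) (φ ψ : (Fin n → F) → ℂ) :
    star φ ⬝ᵥ (Xq F n a * Zq p F n b) *ᵥ ψ =
      ∑ v, star (φ (a + v)) * (traceChar p F (b ⬝ᵥ v) * ψ v) := by
  rw [← mulVec_mulVec, Zq_mulVec, Xq_mulVec, dotProduct, ← Equiv.sum_comp (Equiv.addLeft a)]
  simp

theorem star_dotProduct_XZ_zero_mulVec {n : ℕ} (φ ψ : (Fin n → F) → ℂ) :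
    star φ ⬝ᵥ (Xq F n 0 * Zq p F n 0) *ᵥ ψ = star φ ⬝ᵥ ψ := by
  rw [star_dotProduct_XZ_mulVec]
  simp [dotProduct]

theorem star_dotProduct_XZ_cons_mulVec {m : ℕ} (x y : F) (a b : Fin m → F)
    (φ ψ : (Fin (m + 1) → F) → ℂ) :
    star φ ⬝ᵥ (Xq F (m + 1) (vecCons x a) * Zq p F (m + 1) (vecCons y b)) *ᵥ ψ =
      ∑ γ, traceChar p F (y * γ) *
        (star (slice F m (x + γ) φ) ⬝ᵥ (Xq F m a * Zq p F m b) *ᵥ slice F m γ ψ) := by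
  rw [star_dotProduct_XZ_mulVec, sum_pi_fin_succ]
  refine Finset.sum_congr rfl fun γ _ => ?_
  rw [star_dotProduct_XZ_mulVec, Finset.mul_sum]
  refine Finset.sum_congr rfl fun v _ => ?_
  rw [cons_add_cons, cons_dotProduct_cons, AddChar.map_add_eq_mul]
  simp only [slice_apply]
  ring

end Errors

section Lengthen

variable (F : Type) [Zero F]

noncomputable def lengthen (n : ℕ) : ((Fin n → F) → ℂ) →ₗ[ℂ] ((Fin (n + 1) → F) → ℂ) :=
  Function.ExtendByZero.linearMap ℂ (vecCons 0)

theorem slice_lengthen [DecidableEq F] {n : ℕ} (γ : F) (ψ : (Fin n → F) → ℂ) :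
    slice F n γ (lengthen F n ψ) = if γ = 0 then ψ else 0 := by
  ext v
  split_ifs with hγ
  · subst hγ
    exact (Fin.cons_right_injective (α := fun _ => F) 0).extend_apply ψ 0 v
  · refine Function.extend_apply' _ _ _ ?_
    rintro ⟨u, hu⟩
    exact hγ (Fin.cons_inj.1 hu).1.symm

end Lengthen

section Codes

variable {p : ℕ} {F : Type} [Field F] [Fintype F] [DecidableEq F] [CharP F p]
  [Algebra (ZMod p) F]

theorem star_dotProduct_lengthen_XZ_cons_mulVec [NeZero p] {n : ℕ} (x y : F) (a b : Fin n → F)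
    (φ ψ : (Fin n → F) → ℂ) :
    star (lengthen F n φ) ⬝ᵥ
        (Xq F (n + 1) (vecCons x a) * Zq p F (n + 1) (vecCons y b)) *ᵥ lengthen F n ψ =
      if x = 0 then star φ ⬝ᵥ (Xq F n a * Zq p F n b) *ᵥ ψ else 0 := by
  rw [star_dotProduct_XZ_cons_mulVec, Finset.sum_eq_single 0]
  · rw [add_zero, slice_lengthen, slice_lengthen, if_pos rfl, mul_zero, AddChar.map_zero_eq_one,
      one_mul]
    split_ifs <;> simp
  · intro γ _ hγ
    simp [slice_lengthen, hγ]
  · simp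

theorem IsQECC.map_lengthen [NeZero p] {n k d : ℕ} {Q : Submodule ℂ ((Fin n → F) → ℂ)}
    (hQ : IsQECC p F n k d Q) : IsQECC p F (n + 1) k d (Q.map (lengthen F n)) := by
  have isometry (φ ψ : (Fin n → F) → ℂ) :
      star (lengthen F n φ) ⬝ᵥ lengthen F n ψ = star φ ⬝ᵥ ψ := by
    simpa [star_dotProduct_XZ_zero_mulVec] using
      star_dotProduct_lengthen_XZ_cons_mulVec (p := p) (0 : F) 0 0 0 φ ψ
  refine ⟨(finrank_map_eq_of_star_dotProduct_map_self _ one_ne_zero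
    fun φ _ => by rw [isometry, one_mul]).trans hQ.1, ?_⟩
  rintro a b hw _ ⟨φ, hφ, rfl⟩ _ ⟨ψ, hψ, rfl⟩ horth
  rw [← cons_head_tail a, ← cons_head_tail b] at hw ⊢
  rw [star_dotProduct_lengthen_XZ_cons_mulVec]
  split_ifs
  · refine hQ.2 _ _ ?_ φ hφ ψ hψ (isometry φ ψ ▸ horth)
    rw [wQq_cons] at hw
    omega
  · rfl

theorem card_mul_star_dotProduct_slice_XZ_mulVec [Fact p.Prime] {m : ℕ} (c : F) (a b : Fin m → F)
    (φ ψ : (Fin (m + 1) → F) → ℂ) :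
    Fintype.card F * (star (slice F m c φ) ⬝ᵥ (Xq F m a * Zq p F m b) *ᵥ slice F m c ψ) =
      ∑ β, traceChar p F (-(β * c)) *
        (star φ ⬝ᵥ (Xq F (m + 1) (vecCons 0 a) * Zq p F (m + 1) (vecCons β b)) *ᵥ ψ) := by
  simp_rw [star_dotProduct_XZ_cons_mulVec, zero_add]
  exact ((traceChar_isPrimitive p F).fourier_inversion
    (fun γ => star (slice F m γ φ) ⬝ᵥ (Xq F m a * Zq p F m b) *ᵥ slice F m γ ψ) c).symm

theorem IsQECC.exists_star_dotProduct_slice_eq_mul [Fact p.Prime] {m k d : ℕ}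
    {Q : Submodule ℂ ((Fin (m + 1) → F) → ℂ)} (hQ : IsQECC p F (m + 1) k d Q) (hd : 2 ≤ d)
    (c : F) : ∃ ν : ℂ, ∀ φ ∈ Q, ∀ ψ ∈ Q,
      star (slice F m c φ) ⬝ᵥ slice F m c ψ = ν * (star φ ⬝ᵥ ψ) := by
  have hZ (β : F) : ∃ l : ℂ, ∀ φ ∈ Q, ∀ ψ ∈ Q,
      star φ ⬝ᵥ (Xq F (m + 1) (vecCons 0 0) * Zq p F (m + 1) (vecCons β 0)) *ᵥ ψ =
        l * (star φ ⬝ᵥ ψ) := by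
    refine exists_star_dotProduct_mulVec_eq_mul fun φ hφ ψ hψ => hQ.2 _ _ ?_ φ hφ ψ hψ
    rw [wQq_cons, wQq_zero]
    split_ifs <;> omega
  choose l hl using hZ
  have hq : (Fintype.card F : ℂ) ≠ 0 := Nat.cast_ne_zero.2 Fintype.card_ne_zero
  refine ⟨(∑ β, traceChar p F (-(β * c)) * l β) / Fintype.card F, fun φ hφ ψ hψ => ?_⟩
  have h := card_mul_star_dotProduct_slice_XZ_mulVec c 0 0 φ ψ
  rw [star_dotProduct_XZ_zero_mulVec] at h
  rw [div_mul_eq_mul_div, eq_div_iff hq, mul_comm, h, Finset.sum_mul]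
  refine Finset.sum_congr rfl fun β _ => ?_
  rw [hl β φ hφ ψ hψ, mul_assoc]

theorem IsQECC.map_slice [Fact p.Prime] {m k d : ℕ} {Q : Submodule ℂ ((Fin (m + 1) → F) → ℂ)}
    (hQ : IsQECC p F (m + 1) k d Q) (hd : 2 ≤ d) {c : F} {ν : ℂ} (hν : ν ≠ 0)
    (hslice : ∀ φ ∈ Q, ∀ ψ ∈ Q, star (slice F m c φ) ⬝ᵥ slice F m c ψ = ν * (star φ ⬝ᵥ ψ)) :
    IsQECC p F m k (d - 1) (Q.map (slice F m c)) := by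
  refine ⟨(finrank_map_eq_of_star_dotProduct_map_self _ hν
    fun φ hφ => hslice φ hφ φ hφ).trans hQ.1, ?_⟩
  rintro a b hw _ ⟨φ, hφ, rfl⟩ _ ⟨ψ, hψ, rfl⟩ horth
  have horth' : star φ ⬝ᵥ ψ = 0 := by
    rw [hslice φ hφ ψ hψ] at horth
    exact (mul_eq_zero.1 horth).resolve_left hν
  have h := card_mul_star_dotProduct_slice_XZ_mulVec c a b φ ψ
  rw [Finset.sum_eq_zero fun β _ => ?_] at h
  · exact (mul_eq_zero.1 h).resolve_left (Nat.cast_ne_zero.2 Fintype.card_ne_zero)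
  · rw [hQ.2 _ _ ?_ φ hφ ψ hψ horth', mul_zero]
    rw [wQq_cons]
    split_ifs <;> omega

theorem IsQECC.exists_puncture [Fact p.Prime] {m k d : ℕ}
    {Q : Submodule ℂ ((Fin (m + 1) → F) → ℂ)} (hQ : IsQECC p F (m + 1) k d Q) (hd : 2 ≤ d) :
    ExistsQECC p F m k (d - 1) := by
  have hQ0 : Q ≠ ⊥ := by
    rintro rfl
    exact pow_ne_zero k Fintype.card_ne_zero (hQ.1.symm.trans (finrank_bot _ _))
  obtain ⟨ψ, hψ, hψ0⟩ := Submodule.exists_mem_ne_zero_of_ne_bot hQ0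
  choose ν hν using hQ.exists_star_dotProduct_slice_eq_mul hd
  have hsum : ∑ c, ν c * (star ψ ⬝ᵥ ψ) ≠ 0 := by
    simp_rw [← hν _ ψ hψ ψ hψ, sum_star_dotProduct_slice]
    exact dotProduct_star_self_eq_zero.not.2 hψ0
  obtain ⟨c, -, hc⟩ := Finset.exists_ne_zero_of_sum_ne_zero hsum
  exact ⟨_, hQ.map_slice hd (left_ne_zero_of_mul hc) (hν c)⟩

theorem IsQECC.exists_subcode {n k k' d : ℕ} {Q : Submodule ℂ ((Fin n → F) → ℂ)}
    (hQ : IsQECC p F n k d Q) (hk : k' ≤ k) : ExistsQECC p F n k' d := by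
  have hdim : Fintype.card F ^ k' ≤ Module.finrank ℂ Q :=
    hQ.1 ▸ Nat.pow_le_pow_right Fintype.card_pos hk
  obtain ⟨f, hf⟩ := exists_linearIndependent_of_le_finrank hdim
  refine ⟨(Submodule.span ℂ (Set.range f)).map Q.subtype, ?_, ?_⟩
  · rw [Submodule.finrank_map_subtype_eq, finrank_span_eq_card hf, Fintype.card_fin]
  · intro a b hw φ hφ ψ hψ
    exact hQ.2 a b hw φ (Submodule.map_subtype_le Q _ hφ) ψ (Submodule.map_subtype_le Q _ hψ)

end Codes

theorem statement13_general (p : ℕ) [Fact p.Prime] (F : Type) [Field F] [Fintype F]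
    [DecidableEq F] [CharP F p] [Algebra (ZMod p) F]
    (n k d : ℕ) (hd : 2 ≤ d)
    (h : ExistsQECC p F n k d) :
    ExistsQECC p F n (k - 1) d ∧
    ExistsQECC p F (n + 1) k d ∧
    (2 ≤ n → ExistsQECC p F (n - 1) k (d - 1)) := by
  obtain ⟨Q, hQ⟩ := h
  refine ⟨hQ.exists_subcode (Nat.sub_le k 1), ⟨_, hQ.map_lengthen⟩, fun hn => ?_⟩
  obtain ⟨m, rfl⟩ : ∃ m, n = m + 1 := ⟨n - 1, by omega⟩
  exact hQ.exists_puncture hd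

/-- propagation rules: from an `[[n, k, d]]_q` code with
`k ≥ 1` and `d ≥ 2` one obtains (i) an `[[n, k − 1, d]]_q` code (subcode
construction), (ii) an `[[n + 1, k, d]]_q` code (lengthening), and (iii) if
`n ≥ 2`, an `[[n − 1, k, d − 1]]_q` code (puncturing). -/
theorem statement13 (p : ℕ) [Fact p.Prime] (F : Type) [Field F] [Fintype F]
    [DecidableEq F] [CharP F p] [Algebra (ZMod p) F]
    (n k d : ℕ) (hk : 1 ≤ k) (hd : 2 ≤ d)
    (h : ExistsQECC p F n k d) :
    ExistsQECC p F n (k - 1) d ∧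
    ExistsQECC p F (n + 1) k d ∧
    (2 ≤ n → ExistsQECC p F (n - 1) k (d - 1)) :=
  statement13_general p F n k d hd h
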